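/- Let Y ~ N(μ, s²) with s > 0, let a ∈ ℝ and ε > 0, and define the improvement I = ε² − min{(Y − a)², ε²}. Then E[I] = [ε² − (μ − a)²]·(Φ(u₂) − Φ(u₁)) + s²·[(u₂φ(u₂) − u₁φ(u₁)) − (Φ(u₂) − Φ(u₁))] + 2(μ − a)·s·(φ(u₂) − φ(u₁)), where u₁ = (a − μ − ε)/s, u₂ = (a − μ + ε)/s, and φ, Φ are the standard normal pdf and cdf. -/

import Mathlib

/-!
Substituting `y = s * u + μ` turns the expectation into an integral against the standard normal
density `φ`. The improvement vanishes unless `|y - a| ≤ ε`, i.e. unless `u ∈ [u₁, u₂]`, and is a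
quadratic polynomial in `u` there. Hence the expectation is a combination of the truncated moments
`∫ φ = Φ u₂ - Φ u₁`, `∫ u φ = φ u₁ - φ u₂` and `∫ u² φ = (Φ u₂ - Φ u₁) - (u₂ φ u₂ - u₁ φ u₁)`,
the last two being integrations by parts based on `φ' u = -u φ u`.
-/

open MeasureTheory ProbabilityTheory Real
open scoped NNReal

namespace ProbabilityTheory

lemma hasDerivAt_gaussianPDFReal (μ : ℝ) (v : ℝ≥0) (x : ℝ) :
    HasDerivAt (gaussianPDFReal μ v) (-(x - μ) / v * gaussianPDFReal μ v x) x := by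
  have h : HasDerivAt (fun y ↦ -(y - μ) ^ 2 / (2 * v)) (-(x - μ) / v) x :=
    ((((hasDerivAt_id' x).sub_const μ).fun_pow 2).fun_neg.div_const _).congr_deriv (by ring)
  exact (h.exp.const_mul _).congr_deriv (by rw [gaussianPDFReal]; ring)

@[fun_prop]
lemma continuous_gaussianPDFReal (μ : ℝ) (v : ℝ≥0) : Continuous (gaussianPDFReal μ v) :=
  continuous_iff_continuousAt.2 fun x ↦ (hasDerivAt_gaussianPDFReal μ v x).continuousAt

lemma integral_mul_gaussianPDFReal_zero_one (a b : ℝ) :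
    ∫ u in a..b, u * gaussianPDFReal 0 1 u = gaussianPDFReal 0 1 a - gaussianPDFReal 0 1 b := by
  have h (u : ℝ) : HasDerivAt (fun u ↦ -gaussianPDFReal 0 1 u) (u * gaussianPDFReal 0 1 u) u :=
    (hasDerivAt_gaussianPDFReal 0 1 u).fun_neg.congr_deriv (by simp)
  rw [intervalIntegral.integral_eq_sub_of_hasDerivAt (fun u _ ↦ h u)
    ((by fun_prop : Continuous fun u ↦ u * gaussianPDFReal 0 1 u).intervalIntegrable _ _)]
  ring

lemma integral_sq_mul_gaussianPDFReal_zero_one (a b : ℝ) :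
    ∫ u in a..b, u ^ 2 * gaussianPDFReal 0 1 u =
      (∫ u in a..b, gaussianPDFReal 0 1 u)
        - (b * gaussianPDFReal 0 1 b - a * gaussianPDFReal 0 1 a) := by
  have h (u : ℝ) : HasDerivAt (fun u ↦ u * gaussianPDFReal 0 1 u)
      (gaussianPDFReal 0 1 u - u ^ 2 * gaussianPDFReal 0 1 u) u :=
    ((hasDerivAt_id' u).fun_mul (hasDerivAt_gaussianPDFReal 0 1 u)).congr_deriv (by simp; ring)
  have hφ : IntervalIntegrable (gaussianPDFReal 0 1) volume a b :=
    (continuous_gaussianPDFReal 0 1).intervalIntegrable a b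
  have hsq : IntervalIntegrable (fun u ↦ u ^ 2 * gaussianPDFReal 0 1 u) volume a b :=
    (by fun_prop : Continuous _).intervalIntegrable a b
  rw [← intervalIntegral.integral_eq_sub_of_hasDerivAt (fun u _ ↦ h u) (hφ.sub hsq),
    intervalIntegral.integral_sub hφ hsq]
  ring

lemma integral_quadratic_mul_gaussianPDFReal_zero_one (c₀ c₁ c₂ a b : ℝ) :
    ∫ u in a..b, (c₀ + c₁ * u + c₂ * u ^ 2) * gaussianPDFReal 0 1 u =
      (c₀ + c₂) * (∫ u in a..b, gaussianPDFReal 0 1 u)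
        - c₁ * (gaussianPDFReal 0 1 b - gaussianPDFReal 0 1 a)
        - c₂ * (b * gaussianPDFReal 0 1 b - a * gaussianPDFReal 0 1 a) := by
  have hint {f : ℝ → ℝ} (hf : Continuous f) : IntervalIntegrable f volume a b :=
    hf.intervalIntegrable a b
  simp_rw [add_mul, mul_assoc]
  rw [intervalIntegral.integral_add (hint (by fun_prop)) (hint (by fun_prop)),
    intervalIntegral.integral_add (hint (by fun_prop)) (hint (by fun_prop)),
    intervalIntegral.integral_const_mul, intervalIntegral.integral_const_mul,
    intervalIntegral.integral_const_mul, integral_mul_gaussianPDFReal_zero_one,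
    integral_sq_mul_gaussianPDFReal_zero_one]
  ring

lemma gaussianReal_eq_map_zero_one (μ s : ℝ) :
    gaussianReal μ (s ^ 2).toNNReal = (gaussianReal 0 1).map (fun u ↦ s * u + μ) := by
  have h : (fun u : ℝ ↦ s * u + μ) = (· + μ) ∘ (s * ·) := rfl
  rw [h, ← Measure.map_map (by fun_prop) (by fun_prop), gaussianReal_map_const_mul,
    gaussianReal_map_add_const]
  congr 1
  · ring
  · ext; simp [sq_nonneg]

lemma integral_gaussianReal_eq_integral_gaussianPDFReal_zero_one {E : Type*}
    [NormedAddCommGroup E] [NormedSpace ℝ E] (μ : ℝ) {s : ℝ} (hs : s ≠ 0) (f : ℝ → E) :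
    ∫ y, f y ∂gaussianReal μ (s ^ 2).toNNReal = ∫ u, gaussianPDFReal 0 1 u • f (s * u + μ) := by
  have he : MeasurableEmbedding (fun u : ℝ ↦ s * u + μ) :=
    ((Homeomorph.mulLeft₀ s hs).trans (Homeomorph.addRight μ)).measurableEmbedding
  rw [gaussianReal_eq_map_zero_one, he.integral_map,
    integral_gaussianReal_eq_integral_smul one_ne_zero]

end ProbabilityTheory

lemma Set.preimage_mul_add_Icc {s : ℝ} (hs : 0 < s) (μ b c : ℝ) :
    (fun u ↦ s * u + μ) ⁻¹' Icc b c = Icc ((b - μ) / s) ((c - μ) / s) := by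
  ext u
  simp only [mem_preimage, mem_Icc, div_le_iff₀ hs, le_div_iff₀ hs]
  constructor <;> rintro ⟨h₁, h₂⟩ <;> constructor <;> linarith

lemma sq_sub_min_sq_eq_indicator {a ε : ℝ} (hε : 0 ≤ ε) (y : ℝ) :
    ε ^ 2 - min ((y - a) ^ 2) (ε ^ 2) =
      (Set.Icc (a - ε) (a + ε)).indicator (fun y ↦ ε ^ 2 - (y - a) ^ 2) y := by
  have hmem : (y - a) ^ 2 ≤ ε ^ 2 ↔ y ∈ Set.Icc (a - ε) (a + ε) := by
    rw [sq_le_sq, abs_of_nonneg hε, abs_le, Set.mem_Icc]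
    constructor <;> rintro ⟨h₁, h₂⟩ <;> constructor <;> linarith
  by_cases hy : (y - a) ^ 2 ≤ ε ^ 2
  · rw [min_eq_left hy, Set.indicator_of_mem (hmem.1 hy)]
  · rw [min_eq_right (le_of_not_ge hy), Set.indicator_of_notMem (mt hmem.2 hy), sub_self]

theorem stmt_7 (μ s a ε : ℝ) (hs : 0 < s) (hε : 0 < ε)
    (φ : ℝ → ℝ) (Φ : ℝ → ℝ)
    (hφ : ∀ u, φ u = (Real.sqrt (2 * π))⁻¹ * Real.exp (-u ^ 2 / 2))
    (hΦ : ∀ u, Φ u = ∫ t in Set.Iic u, φ t)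
    (u₁ u₂ : ℝ)
    (hu₁ : u₁ = (a - μ - ε) / s) (hu₂ : u₂ = (a - μ + ε) / s) :
    ∫ y, (ε ^ 2 - min ((y - a) ^ 2) (ε ^ 2)) ∂(gaussianReal μ ((s ^ 2).toNNReal)) =
      (ε ^ 2 - (μ - a) ^ 2) * (Φ u₂ - Φ u₁)
        + s ^ 2 * ((u₂ * φ u₂ - u₁ * φ u₁) - (Φ u₂ - Φ u₁))
        + 2 * (μ - a) * s * (φ u₂ - φ u₁) := by
  obtain rfl : φ = gaussianPDFReal 0 1 := funext fun u ↦ by simp [hφ, gaussianPDFReal]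
  have hΦ_sub : Φ u₂ - Φ u₁ = ∫ u in u₁..u₂, gaussianPDFReal 0 1 u := by
    rw [hΦ, hΦ, intervalIntegral.integral_Iic_sub_Iic
      (integrable_gaussianPDFReal 0 1).integrableOn (integrable_gaussianPDFReal 0 1).integrableOn]
  have hpre : (fun u ↦ s * u + μ) ⁻¹' Set.Icc (a - ε) (a + ε) = Set.Icc u₁ u₂ := by
    rw [Set.preimage_mul_add_Icc hs, hu₁, hu₂]; ring_nf
  have hI (u : ℝ) : gaussianPDFReal 0 1 u • (ε ^ 2 - min ((s * u + μ - a) ^ 2) (ε ^ 2)) =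
      (Set.Icc u₁ u₂).indicator (fun u ↦ ((ε ^ 2 - (μ - a) ^ 2) + 2 * (a - μ) * s * u
        + (-s ^ 2) * u ^ 2) * gaussianPDFReal 0 1 u) u := by
    rw [sq_sub_min_sq_eq_indicator hε.le, ← Set.indicator_comp_right (fun u ↦ s * u + μ), hpre,
      smul_eq_mul, ← Set.indicator_mul_right]
    congr 1; ext x; simp only [Function.comp]; ring
  have hu : u₁ ≤ u₂ := by rw [hu₁, hu₂]; gcongr; linarith
  rw [integral_gaussianReal_eq_integral_gaussianPDFReal_zero_one μ hs.ne', funext hI,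
    integral_indicator measurableSet_Icc, integral_Icc_eq_integral_Ioc,
    ← intervalIntegral.integral_of_le hu, integral_quadratic_mul_gaussianPDFReal_zero_one, hΦ_sub]
  ring
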